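/- arXiv:1612.08888 — 3 statements merged into one kernel-verified Lean document; each statement's English description precedes it below -/
import Mathlib

section
/- Proposition (completely mixed equilibria vs commitment): Let Γ be a non-degenerate bimatrix game with a completely mixed Nash equilibrium (x^N, y^N) (all coordinates of x^N and of y^N are strictly positive), and suppose x^N is not a maximin strategy of player I, i.e. min_j α(x^N, e_j) < v_A. Then α^L > α(x^N, y^N). -/
open Matrix

noncomputable section

/-- The set of mixed strategies: the standard simplex in `ℝ^m`. -/
def Simp (m : ℕ) : Set (Fin m → ℝ) := stdSimplex ℝ (Fin m)

/-- Bilinear payoff `xᵀ A y`. -/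
def pay {m n : ℕ} (A : Matrix (Fin m) (Fin n) ℝ) (x : Fin m → ℝ) (y : Fin n → ℝ) : ℝ :=
  x ⬝ᵥ A.mulVec y

/-- Payoff of a mixed strategy `x` against the pure strategy `j`: `α(x, e_j) = (xᵀA)_j`. -/
def purePay {m n : ℕ} (A : Matrix (Fin m) (Fin n) ℝ) (x : Fin m → ℝ) (j : Fin n) : ℝ :=
  Matrix.vecMul x A j

/-- Pure best replies of player II against `x`. -/
def BRII {m n : ℕ} (B : Matrix (Fin m) (Fin n) ℝ) (x : Fin m → ℝ) : Set (Fin n) :=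
  {j | ∀ k, purePay B x k ≤ purePay B x j}

/-- Best-reply region `X(j)` of column `j`. -/
def XReg {m n : ℕ} (B : Matrix (Fin m) (Fin n) ℝ) (j : Fin n) : Set (Fin m → ℝ) :=
  {x ∈ Simp m | j ∈ BRII B x}

/-- `D`: columns whose best-reply region has a fully mixed point. -/
def Dset {m n : ℕ} (B : Matrix (Fin m) (Fin n) ℝ) : Set (Fin n) :=
  {j | ∃ x ∈ XReg B j, ∀ i, 0 < x i}

/-- `E(j)`: columns of `B` payoff-equivalent to column `j`. -/
def Ecols {m n : ℕ} (B : Matrix (Fin m) (Fin n) ℝ) (j : Fin n) : Set (Fin n) :=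
  {k | ∀ i, B i k = B i j}

/-- `min_j α(x, e_j)`. -/
def minPure {m n : ℕ} (A : Matrix (Fin m) (Fin n) ℝ) (x : Fin m → ℝ) : ℝ :=
  sInf {w | ∃ j, w = purePay A x j}

/-- `max_j α(x, e_j)`. -/
def maxPure {m n : ℕ} (A : Matrix (Fin m) (Fin n) ℝ) (x : Fin m → ℝ) : ℝ :=
  sSup {w | ∃ j, w = purePay A x j}

/-- `max_{j ∈ BR_II(x)} α(x, e_j)`. -/
def maxBR {m n : ℕ} (A B : Matrix (Fin m) (Fin n) ℝ) (x : Fin m → ℝ) : ℝ :=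
  sSup {w | ∃ j ∈ BRII B x, w = purePay A x j}

/-- Matrix game value `v_A = max_{x ∈ X} min_j α(x, e_j)`. -/
def matVal {m n : ℕ} (A : Matrix (Fin m) (Fin n) ℝ) : ℝ :=
  sSup {v | ∃ x ∈ Simp m, v = minPure A x}

/-- `min_{k ∈ E(j)} α(x, e_k)`. -/
def minE {m n : ℕ} (A B : Matrix (Fin m) (Fin n) ℝ) (j : Fin n) (x : Fin m → ℝ) : ℝ :=
  sInf {w | ∃ k ∈ Ecols B j, w = purePay A x k}

/-- Commitment value `α^L = max_{j∈D} max_{x∈X(j)} min_{k∈E(j)} α(x,e_k)`. -/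
def alphaL {m n : ℕ} (A B : Matrix (Fin m) (Fin n) ℝ) : ℝ :=
  sSup {v | ∃ j ∈ Dset B, ∃ x ∈ XReg B j, v = minE A B j x}

/-- Highest leader payoff `α^H = max_{j : X(j)≠∅} max_{x∈X(j)} α(x,e_j)`. -/
def alphaH {m n : ℕ} (A B : Matrix (Fin m) (Fin n) ℝ) : ℝ :=
  sSup {v | ∃ j, ∃ x ∈ XReg B j, v = purePay A x j}

/-- Commitment optimal strategies of the leader (player I). -/
def XLset {m n : ℕ} (A B : Matrix (Fin m) (Fin n) ℝ) : Set (Fin m → ℝ) :=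
  {x | ∃ j ∈ Dset B, x ∈ XReg B j ∧ minE A B j x = alphaL A B}

/-- Non-degeneracy for player I: no mixed strategy of player I has more pure best
replies (among player II's pure strategies) than the size of its support. -/
def NondegFor {m n : ℕ} (B : Matrix (Fin m) (Fin n) ℝ) : Prop :=
  ∀ x ∈ Simp m, (BRII B x).ncard ≤ {i | x i ≠ 0}.ncard

/-- Nash equilibrium of the bimatrix game `(A,B)`. -/
def isNE {m n : ℕ} (A B : Matrix (Fin m) (Fin n) ℝ) (x : Fin m → ℝ) (y : Fin n → ℝ) : Prop :=
  x ∈ Simp m ∧ y ∈ Simp n ∧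
  (∀ x' ∈ Simp m, pay A x' y ≤ pay A x y) ∧
  (∀ y' ∈ Simp n, pay B x y' ≤ pay B x y)

/-- Strategies of player I appearing in some Nash equilibrium. -/
def NEX {m n : ℕ} (A B : Matrix (Fin m) (Fin n) ℝ) : Set (Fin m → ℝ) :=
  {x | ∃ y, isNE A B x y}

/-- Strategies of player II appearing in some Nash equilibrium. -/
def NEY {m n : ℕ} (A B : Matrix (Fin m) (Fin n) ℝ) : Set (Fin n → ℝ) :=
  {y | ∃ x, isNE A B x y}

/-- Weakly unilaterally competitive bimatrix game. -/
def WUC {m n : ℕ} (A B : Matrix (Fin m) (Fin n) ℝ) : Prop :=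
  (∀ x₁ ∈ Simp m, ∀ x₂ ∈ Simp m, ∀ y ∈ Simp n,
    (pay A x₁ y > pay A x₂ y → pay B x₁ y ≤ pay B x₂ y) ∧
    (pay A x₁ y = pay A x₂ y → pay B x₁ y = pay B x₂ y)) ∧
  (∀ y₁ ∈ Simp n, ∀ y₂ ∈ Simp n, ∀ x ∈ Simp m,
    (pay B x y₁ > pay B x y₂ → pay A x y₁ ≤ pay A x y₂) ∧
    (pay B x y₁ = pay B x y₂ → pay A x y₁ = pay A x y₂))

/-! At a completely mixed equilibrium each player is indifferent between all of his pure
strategies, so every column is a best reply to `xN` and every row is a best reply to `yN`;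
non-degeneracy for both players then gives `m = n`. If two columns of `B` were equal, then
`m = n` unknowns would face only `n - 1` linear conditions (including `∑ d = 0`), so some
direction `d` keeps all columns equally good; moving from `xN` along `d` reaches a boundary
point of the simplex with `n` best replies but fewer than `n` positive coordinates. Hence
`E(j) = {j}` for all `j`, and as `xN ∈ X(j)` is completely mixed, `α^L ≥ α(xN, e_j)` for
every `j`. Finally `min_j α(xN, e_j) < v_A ≤ α(xN, yN)`, and `α(xN, yN)` is a `yN`-average
of the `α(xN, e_j)`, so one of them exceeds it. -/

open Finset

lemma sum_mul_lt_of_forall_le_of_lt {ι : Type*} [Fintype ι] {w p : ι → ℝ} {c : ℝ}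
    (hw : ∀ j, 0 < w j) (hw1 : ∑ j, w j = 1) (hle : ∀ j, p j ≤ c) {j₀ : ι} (hlt : p j₀ < c) :
    ∑ j, w j * p j < c := by
  calc ∑ j, w j * p j < ∑ j, w j * c :=
        sum_lt_sum (fun j _ => mul_le_mul_of_nonneg_left (hle j) (hw j).le)
          ⟨j₀, mem_univ _, mul_lt_mul_of_pos_left hlt (hw j₀)⟩
    _ = c := by rw [← sum_mul, hw1, one_mul]

lemma exists_ne_zero_vecMul_eq_zero {K ι κ : Type*} [Field K] [Fintype ι] [Fintype κ]
    (M : Matrix ι κ K) (h : Fintype.card κ < Fintype.card ι) : ∃ d ≠ 0, d ᵥ* M = 0 := by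
  have hker := LinearMap.ker_ne_bot_of_finrank_lt (f := M.vecMulLinear) (by simpa using h)
  obtain ⟨d, hd, hd0⟩ := (Submodule.ne_bot_iff _).1 hker
  exact ⟨d, hd0, hd⟩

lemma exists_add_smul_mem_stdSimplex_eq_zero {ι : Type*} [Fintype ι] {x d : ι → ℝ}
    (hx : x ∈ stdSimplex ℝ ι) (hd : d ≠ 0) (hsum : ∑ i, d i = 0) :
    ∃ t : ℝ, x + t • d ∈ stdSimplex ℝ ι ∧ ∃ i, (x + t • d) i = 0 := by
  obtain ⟨i₁, hi₁⟩ : ∃ i, d i < 0 := by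
    by_contra! h
    exact hd (funext fun i => (sum_eq_zero_iff_of_nonneg fun i _ => h i).1 hsum i (mem_univ i))
  obtain ⟨i₀, hi₀, hmin⟩ :=
    exists_min_image (univ.filter fun i => d i < 0) (fun i => x i / -d i) ⟨i₁, by simpa⟩
  have hdi₀ : d i₀ < 0 := (mem_filter.1 hi₀).2
  set t := x i₀ / -d i₀
  have ht : 0 ≤ t := div_nonneg (hx.1 i₀) (by linarith)
  refine ⟨t, ⟨fun i => ?_, ?_⟩, i₀, ?_⟩
  · rcases le_or_gt 0 (d i) with hdi | hdi
    · simpa using add_nonneg (hx.1 i) (mul_nonneg ht hdi)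
    · have := (le_div_iff₀ (neg_pos.2 hdi)).1 (hmin i (by simpa))
      simp only [Pi.add_apply, Pi.smul_apply, smul_eq_mul]
      linarith
  · simp [sum_add_distrib, ← mul_sum, hsum, hx.2]
  · simp only [Pi.add_apply, Pi.smul_apply, smul_eq_mul, t]
    field_simp [hdi₀.ne]
    ring

section

variable {m n : ℕ}

lemma pay_eq_sum_mul_purePay (A : Matrix (Fin m) (Fin n) ℝ) (x : Fin m → ℝ) (y : Fin n → ℝ) :
    pay A x y = ∑ j, y j * purePay A x j := by
  rw [pay, dotProduct_mulVec, dotProduct_comm]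
  rfl

lemma pay_single (A : Matrix (Fin m) (Fin n) ℝ) (x : Fin m → ℝ) (j : Fin n) :
    pay A x (Pi.single j 1) = purePay A x j := by
  rw [pay, dotProduct_mulVec, dotProduct_single, mul_one, purePay]

lemma pay_transpose (A : Matrix (Fin m) (Fin n) ℝ) (x : Fin m → ℝ) (y : Fin n → ℝ) :
    pay Aᵀ y x = pay A x y := by
  rw [pay, pay, mulVec_transpose, dotProduct_comm, dotProduct_mulVec]

lemma purePay_add_smul (B : Matrix (Fin m) (Fin n) ℝ) (x d : Fin m → ℝ) (t : ℝ) (j : Fin n) :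
    purePay B (x + t • d) j = purePay B x j + t * (d ᵥ* B) j := by
  simp only [purePay, add_vecMul, smul_vecMul, Pi.add_apply, Pi.smul_apply, smul_eq_mul]

lemma minPure_eq_iInf (A : Matrix (Fin m) (Fin n) ℝ) (x : Fin m → ℝ) :
    minPure A x = ⨅ j, purePay A x j := by
  rw [minPure, iInf]
  congr 1
  ext w
  simp [eq_comm]

lemma minPure_le_purePay (A : Matrix (Fin m) (Fin n) ℝ) (x : Fin m → ℝ) (j : Fin n) :
    minPure A x ≤ purePay A x j :=
  minPure_eq_iInf A x ▸ ciInf_le (Set.finite_range _).bddBelow j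

lemma minPure_le_pay (A : Matrix (Fin m) (Fin n) ℝ) (x : Fin m → ℝ) {y : Fin n → ℝ}
    (hy : y ∈ Simp n) : minPure A x ≤ pay A x y := by
  rw [pay_eq_sum_mul_purePay]
  calc minPure A x = ∑ j, y j * minPure A x := by rw [← sum_mul, hy.2, one_mul]
    _ ≤ ∑ j, y j * purePay A x j :=
      sum_le_sum fun j _ => mul_le_mul_of_nonneg_left (minPure_le_purePay A x j) (hy.1 j)

lemma exists_minPure_eq (A : Matrix (Fin m) (Fin n) ℝ) (x : Fin m → ℝ) [NeZero n] :
    ∃ j, purePay A x j = minPure A x :=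
  minPure_eq_iInf A x ▸ exists_eq_ciInf_of_finite

lemma BRII_eq_univ_iff (B : Matrix (Fin m) (Fin n) ℝ) (x : Fin m → ℝ) :
    BRII B x = Set.univ ↔ ∀ j k, purePay B x j = purePay B x k := by
  simp only [Set.eq_univ_iff_forall, BRII, Set.mem_ofPred_eq]
  exact ⟨fun h j k => le_antisymm (h k j) (h j k), fun h j k => (h k j).le⟩

lemma purePay_eq_pay_of_best_reply {B : Matrix (Fin m) (Fin n) ℝ} {x : Fin m → ℝ}
    {y : Fin n → ℝ} (hy : y ∈ Simp n) (hpos : ∀ j, 0 < y j)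
    (hbest : ∀ y' ∈ Simp n, pay B x y' ≤ pay B x y) (j : Fin n) :
    purePay B x j = pay B x y := by
  have hle : ∀ k, purePay B x k ≤ pay B x y := fun k =>
    pay_single B x k ▸ hbest _ (single_mem_stdSimplex ℝ k)
  refine le_antisymm (hle j) (not_lt.1 fun hlt => ?_)
  have := sum_mul_lt_of_forall_le_of_lt hpos hy.2 hle hlt
  rw [← pay_eq_sum_mul_purePay] at this
  exact this.false

lemma BRII_eq_univ_of_best_reply {B : Matrix (Fin m) (Fin n) ℝ} {x : Fin m → ℝ}
    {y : Fin n → ℝ} (hy : y ∈ Simp n) (hpos : ∀ j, 0 < y j)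
    (hbest : ∀ y' ∈ Simp n, pay B x y' ≤ pay B x y) : BRII B x = Set.univ :=
  (BRII_eq_univ_iff B x).2 fun j k => by
    rw [purePay_eq_pay_of_best_reply hy hpos hbest j, purePay_eq_pay_of_best_reply hy hpos hbest k]

lemma exists_pay_lt_purePay {A : Matrix (Fin m) (Fin n) ℝ} {x : Fin m → ℝ} {y : Fin n → ℝ}
    (hy : y ∈ Simp n) (hpos : ∀ j, 0 < y j) (hlt : minPure A x < pay A x y) :
    ∃ j, pay A x y < purePay A x j := by
  have : NeZero n := ⟨by rintro rfl; simpa using hy.2⟩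
  obtain ⟨j₀, hj₀⟩ := exists_minPure_eq A x
  by_contra! hle
  have := sum_mul_lt_of_forall_le_of_lt hpos hy.2 hle (hj₀ ▸ hlt)
  rw [← pay_eq_sum_mul_purePay] at this
  exact this.false

lemma NondegFor.le_ncard_of_BRII_eq_univ {B : Matrix (Fin m) (Fin n) ℝ} (hB : NondegFor B)
    {x : Fin m → ℝ} (hx : x ∈ Simp m) (hBR : BRII B x = Set.univ) :
    n ≤ {i | x i ≠ 0}.ncard := by
  simpa [hBR] using hB x hx

lemma NondegFor.card_le {B : Matrix (Fin m) (Fin n) ℝ} (hB : NondegFor B)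
    {x : Fin m → ℝ} (hx : x ∈ Simp m) (hBR : BRII B x = Set.univ) : n ≤ m :=
  (hB.le_ncard_of_BRII_eq_univ hx hBR).trans (by simpa using Set.ncard_le_card {i | x i ≠ 0})

lemma exists_ne_zero_sum_eq_zero_vecMul_eq_of_col_eq (B : Matrix (Fin m) (Fin n) ℝ)
    (hnm : n ≤ m) {j₀ k₀ : Fin n} (hne : k₀ ≠ j₀) (hcol : ∀ i, B i k₀ = B i j₀) :
    ∃ d ≠ 0, ∑ i, d i = 0 ∧ ∀ j, (d ᵥ* B) j = (d ᵥ* B) j₀ := by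
  -- Column `k₀` of `M` encodes `∑ i, d i = 0` instead of `(d ᵥ* B) k₀ = (d ᵥ* B) j₀`,
  -- which holds anyway because columns `k₀` and `j₀` of `B` agree.
  let M : Matrix (Fin m) {j // j ≠ j₀} ℝ :=
    Matrix.of fun i j => if (j : Fin n) = k₀ then 1 else B i j - B i j₀
  have hcard : Fintype.card {j // j ≠ j₀} < Fintype.card (Fin m) := by
    simp only [ne_eq, Fintype.card_subtype_compl, Fintype.card_fin, Fintype.card_unique]
    omega
  obtain ⟨d, hd0, hd⟩ := exists_ne_zero_vecMul_eq_zero M hcard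
  have hM : ∀ j : {j // j ≠ j₀}, ∑ i, d i * M i j = 0 := fun j => congrFun hd j
  refine ⟨d, hd0, by simpa [M] using hM ⟨k₀, hne⟩, fun j => ?_⟩
  by_cases hj₀ : j = j₀
  · rw [hj₀]
  by_cases hk₀ : j = k₀
  · simp only [vecMul, dotProduct, hk₀, hcol]
  have := hM ⟨j, hj₀⟩
  simp only [M, of_apply, hk₀, if_false, mul_sub, sum_sub_distrib] at this
  simpa [vecMul, dotProduct, sub_eq_zero] using this

lemma NondegFor.Ecols_eq_singleton {B : Matrix (Fin m) (Fin n) ℝ} (hB : NondegFor B)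
    (hmn : m ≤ n) {x : Fin m → ℝ} (hx : x ∈ Simp m) (hBR : BRII B x = Set.univ) (j : Fin n) :
    Ecols B j = {j} := by
  refine Set.eq_singleton_iff_unique_mem.2 ⟨fun i => rfl, fun k hk => ?_⟩
  by_contra hne
  obtain ⟨d, hd0, hsum, hconst⟩ :=
    exists_ne_zero_sum_eq_zero_vecMul_eq_of_col_eq B (hB.card_le hx hBR) hne hk
  obtain ⟨t, hxt, i₀, hi₀⟩ := exists_add_smul_mem_stdSimplex_eq_zero hx hd0 hsum
  have hBRt : BRII B (x + t • d) = Set.univ := (BRII_eq_univ_iff B _).2 fun j' k' => by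
    rw [purePay_add_smul, purePay_add_smul, (BRII_eq_univ_iff B x).1 hBR j' k', hconst j',
      hconst k']
  have hsupp : {i | (x + t • d) i ≠ 0}.ncard < m := by
    have hne : {i | (x + t • d) i ≠ 0} ≠ Set.univ := fun h =>
      (h ▸ Set.mem_univ i₀ : i₀ ∈ {i | (x + t • d) i ≠ 0}) hi₀
    simpa using Set.ncard_lt_card hne
  have := hB.le_ncard_of_BRII_eq_univ hxt hBRt
  omega

lemma minE_eq_purePay_of_Ecols_eq {A B : Matrix (Fin m) (Fin n) ℝ} {j : Fin n}
    (hE : Ecols B j = {j}) (x : Fin m → ℝ) : minE A B j x = purePay A x j := by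
  simp [minE, hE]

lemma matVal_le {A : Matrix (Fin m) (Fin n) ℝ} {y : Fin n → ℝ} {c : ℝ} (hy : y ∈ Simp n)
    (hne : (Simp m).Nonempty) (hc : ∀ x ∈ Simp m, pay A x y ≤ c) : matVal A ≤ c := by
  obtain ⟨x₀, hx₀⟩ := hne
  refine csSup_le ⟨_, x₀, hx₀, rfl⟩ ?_
  rintro _ ⟨x, hx, rfl⟩
  exact (minPure_le_pay A x hy).trans (hc x hx)

lemma purePay_le_alphaL {A B : Matrix (Fin m) (Fin n) ℝ} (hE : ∀ j, Ecols B j = {j})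
    {j : Fin n} (hj : j ∈ Dset B) {x : Fin m → ℝ} (hx : x ∈ XReg B j) :
    purePay A x j ≤ alphaL A B := by
  have hbdd : BddAbove {v | ∃ j ∈ Dset B, ∃ x ∈ XReg B j, v = minE A B j x} := by
    have hcont (k : Fin n) : Continuous (purePay A · k) := by
      unfold purePay vecMul dotProduct
      fun_prop
    refine (Set.finite_univ.bddAbove_biUnion.2 fun k _ =>
      (isCompact_stdSimplex ℝ (Fin m)).bddAbove_image (hcont k).continuousOn).mono ?_
    rintro _ ⟨k, -, x', hx', rfl⟩
    rw [minE_eq_purePay_of_Ecols_eq (hE k)]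
    exact Set.mem_biUnion (Set.mem_univ k) ⟨x', hx'.1, rfl⟩
  exact le_csSup hbdd ⟨j, hj, x, hx, (minE_eq_purePay_of_Ecols_eq (hE j) x).symm⟩

end

/-- in a non-degenerate bimatrix game, at a completely mixed Nash
equilibrium `(x^N, y^N)` where `x^N` is not maximin (`min_j α(x^N,e_j) < v_A`),
the commitment value strictly exceeds the equilibrium payoff: `α^L > α(x^N,y^N)`. -/
theorem stmt4 {m n : ℕ} (A B : Matrix (Fin m) (Fin n) ℝ)
    (hndI : NondegFor B) (hndII : NondegFor Aᵀ)
    (xN : Fin m → ℝ) (yN : Fin n → ℝ) (hNE : isNE A B xN yN)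
    (hx : ∀ i, 0 < xN i) (hy : ∀ j, 0 < yN j)
    (hnotmaximin : minPure A xN < matVal A) :
    pay A xN yN < alphaL A B := by
  obtain ⟨hxS, hyS, hA, hB⟩ := hNE
  have hBRx : BRII B xN = Set.univ := BRII_eq_univ_of_best_reply hyS hy hB
  have hBRy : BRII Aᵀ yN = Set.univ :=
    BRII_eq_univ_of_best_reply hxS hx fun x' hx' => by simpa only [pay_transpose] using hA x' hx'
  have hE := hndI.Ecols_eq_singleton (hndII.card_le hyS hBRy) hxS hBRx
  obtain ⟨j, hj⟩ :=
    exists_pay_lt_purePay hyS hy (hnotmaximin.trans_le (matVal_le hyS ⟨xN, hxS⟩ hA))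
  have hxj : xN ∈ XReg B j := ⟨hxS, hBRx ▸ Set.mem_univ j⟩
  exact hj.trans_le (purePay_le_alphaL hE ⟨xN, hxj, hx⟩ hxj)
end
end

section
/- Condition (conv): Let Γ be a bimatrix game such that for every x ∈ X, max_{j∈BR_II(x)} α(x,e_j) = max_{j} α(x,e_j). Then α^H = max_{i,j} A_{ij}, the largest entry of player I's payoff matrix. -/
open Matrix

noncomputable section

/-!
Each `α(x, e_j)` is a convex combination of the entries of column `j`, so `α^H ≤ max A`. At the
pure strategy `e_{i₀}` of a row holding the largest entry, `max_j α(e_{i₀}, e_j)` is that entry,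
and (conv) makes some best reply of player II attain it.
-/

lemma purePay_le_of_forall_le {m n : ℕ} (A : Matrix (Fin m) (Fin n) ℝ) {x : Fin m → ℝ}
    (hx : x ∈ Simp m) {j : Fin n} {c : ℝ} (hc : ∀ i, A i j ≤ c) : purePay A x j ≤ c :=
  calc purePay A x j = ∑ i, x i * A i j := by simp [purePay, vecMul, dotProduct]
    _ ≤ ∑ i, x i * c := by gcongr with i; exacts [hx.1 i, hc i]
    _ = c := by rw [← Finset.sum_mul, hx.2, one_mul]

lemma purePay_single {m n : ℕ} (A : Matrix (Fin m) (Fin n) ℝ) (i : Fin m) (j : Fin n) :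
    purePay A (Pi.single i 1) j = A i j := by
  simp [purePay]

lemma nonempty_of_mem_Simp {m : ℕ} {x : Fin m → ℝ} (hx : x ∈ Simp m) : Nonempty (Fin m) := by
  rw [← not_isEmpty_iff]
  intro h
  simpa using hx.2

lemma maxPure_eq_of_forall_le {m n : ℕ} (A : Matrix (Fin m) (Fin n) ℝ) {x : Fin m → ℝ}
    {j : Fin n} (hj : ∀ k, purePay A x k ≤ purePay A x j) : maxPure A x = purePay A x j :=
  IsGreatest.csSup_eq ⟨⟨j, rfl⟩, by rintro _ ⟨k, rfl⟩; exact hj k⟩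

lemma exists_mem_BRII_purePay_eq_maxBR {m n : ℕ} [Nonempty (Fin n)]
    (A B : Matrix (Fin m) (Fin n) ℝ) (x : Fin m → ℝ) : ∃ j ∈ BRII B x, purePay A x j = maxBR A B x := by
  obtain ⟨j, hj⟩ := Finite.exists_max (purePay B x)
  have hne : {w | ∃ j ∈ BRII B x, w = purePay A x j}.Nonempty := ⟨_, j, hj, rfl⟩
  have hfin : {w | ∃ j ∈ BRII B x, w = purePay A x j}.Finite :=
    (Set.finite_range (purePay A x)).subset fun _ ⟨k, _, hk⟩ => ⟨k, hk.symm⟩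
  obtain ⟨k, hk, hkmax⟩ := hne.csSup_mem hfin
  exact ⟨k, hk, hkmax.symm⟩

lemma isGreatest_alphaH_set {m n : ℕ} (A B : Matrix (Fin m) (Fin n) ℝ) {i₀ : Fin m} {j₀ : Fin n}
    (hmax : ∀ i j, A i j ≤ A i₀ j₀)
    (hconv : maxBR A B (Pi.single i₀ 1) = maxPure A (Pi.single i₀ 1)) :
    IsGreatest {v | ∃ j, ∃ x ∈ XReg B j, v = purePay A x j} (A i₀ j₀) := by
  have : Nonempty (Fin n) := ⟨j₀⟩
  refine ⟨?_, by rintro _ ⟨j, x, hx, rfl⟩; exact purePay_le_of_forall_le A hx.1 (hmax · j)⟩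
  obtain ⟨j, hj, hjmax⟩ := exists_mem_BRII_purePay_eq_maxBR A B (Pi.single i₀ 1)
  have hmaxPure : maxPure A (Pi.single i₀ 1) = A i₀ j₀ := by
    rw [maxPure_eq_of_forall_le A (j := j₀) (by simpa only [purePay_single] using hmax i₀),
      purePay_single]
  exact ⟨j, Pi.single i₀ 1, ⟨single_mem_stdSimplex ℝ i₀, hj⟩, by rw [hjmax, hconv, hmaxPure]⟩

/-- condition (conv): if for every `x ∈ X`,
`max_{j∈BR_II(x)} α(x,e_j) = max_j α(x,e_j)`, then `α^H` equals the largest entry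
of player I's payoff matrix. -/
theorem stmt10 {m n : ℕ} (A B : Matrix (Fin m) (Fin n) ℝ)
    (hconv : ∀ x ∈ Simp m, maxBR A B x = maxPure A x) :
    alphaH A B = sSup {v | ∃ i j, v = A i j} := by
  rcases isEmpty_or_nonempty (Fin m × Fin n) with hmn | hmn
  · have hentries : {v | ∃ i j, v = A i j} = ∅ :=
      Set.eq_empty_of_forall_notMem fun _ ⟨i, j, _⟩ => hmn.false (i, j)
    have hleader : {v | ∃ j, ∃ x ∈ XReg B j, v = purePay A x j} = ∅ :=
      Set.eq_empty_of_forall_notMem fun _ ⟨j, x, hx, _⟩ =>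
        have := nonempty_of_mem_Simp hx.1
        hmn.false (Classical.arbitrary _, j)
    rw [alphaH, hentries, hleader]
  obtain ⟨⟨i₀, j₀⟩, hmax⟩ := Finite.exists_max fun p : Fin m × Fin n => A p.1 p.2
  have hentries : IsGreatest {v | ∃ i j, v = A i j} (A i₀ j₀) :=
    ⟨⟨i₀, j₀, rfl⟩, by rintro _ ⟨i, j, rfl⟩; exact hmax (i, j)⟩
  rw [alphaH, hentries.csSup_eq, (isGreatest_alphaH_set A B (fun i j => hmax (i, j))
    (hconv _ (single_mem_stdSimplex ℝ i₀))).csSup_eq]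
end
end

section
/- Alternative sufficient condition for α^L = α^H: Let Γ be a bimatrix game for which there exists x_0 ∈ X such that α^H is attained at x_0 (i.e. there is j_0 ∈ BR_II(x_0) with α(x_0,e_{j_0}) = α^H) and α(x_0,e_j) is constant over j ∈ BR_II(x_0). Then α^L = α^H. -/
open Matrix

noncomputable section

/-! `α^L ≤ α^H` holds because the minimum over `E(j)` is at most the payoff against `j` itself.
Conversely, the fully mixed strategies accumulate at `x₀` (along the segment to the barycenter),
and best replies are upper hemicontinuous: near `x₀`, every best reply (hence every column of
`E(j)` for a best reply `j`) is already a best reply at `x₀`, where the leader's payoff against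
it is the common value `α^H`. So fully mixed commitments near `x₀` guarantee nearly `α^H`. -/

open Filter Topology

theorem stdSimplex_subset_closure_pos {ι : Type*} [Fintype ι] :
    stdSimplex ℝ ι ⊆ closure {x ∈ stdSimplex ℝ ι | ∀ i, 0 < x i} := by
  intro x hx
  have : Nonempty ι := by
    by_contra h
    simpa [not_nonempty_iff.mp h] using hx.2
  set u : ι → ℝ := fun _ => (Fintype.card ι : ℝ)⁻¹
  have hu : u ∈ stdSimplex ℝ ι := ⟨fun _ => by positivity, by simp [u]⟩
  refine closure_mono ?_ (segment_subset_closure_openSegment (left_mem_segment ℝ x u))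
  intro z hz
  refine ⟨(convex_stdSimplex ℝ ι).openSegment_subset hx hu hz, fun i => ?_⟩
  obtain ⟨a, b, ha, hb, -, rfl⟩ := hz
  have := hx.1 i
  simp only [Pi.add_apply, Pi.smul_apply, smul_eq_mul, u]
  positivity

section

variable {m n : ℕ}

theorem continuous_purePay (A : Matrix (Fin m) (Fin n) ℝ) (j : Fin n) :
    Continuous fun x => purePay A x j := by
  unfold purePay
  fun_prop

theorem BRII_nonempty [Nonempty (Fin n)] (B : Matrix (Fin m) (Fin n) ℝ) (x : Fin m → ℝ) :
    (BRII B x).Nonempty :=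
  Finite.exists_max (purePay B x)

theorem Ecols_subset_BRII {B : Matrix (Fin m) (Fin n) ℝ} {x : Fin m → ℝ} {j : Fin n}
    (hj : j ∈ BRII B x) : Ecols B j ⊆ BRII B x := by
  intro k hk k'
  have : purePay B x k = purePay B x j := by
    simp only [purePay, Matrix.vecMul, dotProduct]
    exact Finset.sum_congr rfl fun i _ => by rw [hk i]
  exact this ▸ hj k'

theorem eventually_BRII_subset (B : Matrix (Fin m) (Fin n) ℝ) (x₀ : Fin m → ℝ) :
    ∀ᶠ x in 𝓝 x₀, BRII B x ⊆ BRII B x₀ := by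
  refine eventually_all.2 fun k => ?_
  by_cases hk : k ∈ BRII B x₀
  · exact .of_forall fun _ _ => hk
  obtain ⟨k', hlt⟩ : ∃ k', purePay B x₀ k < purePay B x₀ k' := by
    simpa [BRII] using hk
  filter_upwards [(continuous_purePay B k).continuousAt.eventually_lt
    (continuous_purePay B k').continuousAt hlt] with x hx hkx
  exact absurd (hkx k') hx.not_ge

theorem minE_le_purePay (A B : Matrix (Fin m) (Fin n) ℝ) (j : Fin n) (x : Fin m → ℝ) :
    minE A B j x ≤ purePay A x j := by
  refine csInf_le ((Set.finite_range (purePay A x)).subset ?_).bddBelow ⟨j, fun _ => rfl, rfl⟩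
  rintro _ ⟨k, -, rfl⟩
  exact ⟨k, rfl⟩

theorem bddAbove_alphaH_set (A B : Matrix (Fin m) (Fin n) ℝ) :
    BddAbove {v | ∃ j, ∃ x ∈ XReg B j, v = purePay A x j} := by
  refine ((Set.finite_univ.bddAbove_biUnion).2 fun j _ =>
    (isCompact_stdSimplex ℝ (Fin m)).bddAbove_image (continuous_purePay A j).continuousOn).mono ?_
  rintro _ ⟨j, x, hx, rfl⟩
  exact Set.mem_biUnion (Set.mem_univ j) ⟨x, hx.1, rfl⟩

theorem minE_le_alphaH (A : Matrix (Fin m) (Fin n) ℝ) {B : Matrix (Fin m) (Fin n) ℝ} {j : Fin n}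
    {x : Fin m → ℝ} (hx : x ∈ XReg B j) : minE A B j x ≤ alphaH A B :=
  (minE_le_purePay A B j x).trans (le_csSup (bddAbove_alphaH_set A B) ⟨j, x, hx, rfl⟩)

theorem alphaL_le_alphaH (A : Matrix (Fin m) (Fin n) ℝ) {B : Matrix (Fin m) (Fin n) ℝ}
    (hD : (Dset B).Nonempty) : alphaL A B ≤ alphaH A B := by
  obtain ⟨j, x, hx, hpos⟩ := hD
  refine csSup_le ⟨_, j, ⟨x, hx, hpos⟩, x, hx, rfl⟩ ?_
  rintro _ ⟨j, -, x, hx, rfl⟩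
  exact minE_le_alphaH A hx

theorem le_alphaL_of_forall_BRII_le [Nonempty (Fin n)] (A B : Matrix (Fin m) (Fin n) ℝ)
    {x : Fin m → ℝ} {c : ℝ} (hx : x ∈ Simp m) (hpos : ∀ i, 0 < x i)
    (hc : ∀ k ∈ BRII B x, c ≤ purePay A x k) : c ≤ alphaL A B := by
  obtain ⟨j, hj⟩ := BRII_nonempty B x
  have hbdd : BddAbove {v | ∃ j ∈ Dset B, ∃ x ∈ XReg B j, v = minE A B j x} :=
    ⟨alphaH A B, by rintro _ ⟨j, -, x, hx, rfl⟩; exact minE_le_alphaH A hx⟩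
  calc c ≤ minE A B j x := le_csInf ⟨_, j, fun _ => rfl, rfl⟩
        fun _ ⟨k, hk, hw⟩ => hw ▸ hc k (Ecols_subset_BRII hj hk)
    _ ≤ alphaL A B := le_csSup hbdd ⟨j, ⟨x, ⟨hx, hj⟩, hpos⟩, x, ⟨hx, hj⟩, rfl⟩

end

/-- alternative sufficient condition: if `α^H` is attained at some
`x₀ ∈ X` (i.e. `α(x₀,e_{j₀}) = α^H` for some `j₀ ∈ BR_II(x₀)`) and `α(x₀,e_j)` is
constant over `j ∈ BR_II(x₀)`, then `α^L = α^H`. -/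
theorem stmt11 {m n : ℕ} (A B : Matrix (Fin m) (Fin n) ℝ)
    (x₀ : Fin m → ℝ) (hx₀ : x₀ ∈ Simp m)
    (hatt : ∃ j₀ ∈ BRII B x₀, purePay A x₀ j₀ = alphaH A B)
    (hconst : ∀ j ∈ BRII B x₀, ∀ j' ∈ BRII B x₀, purePay A x₀ j = purePay A x₀ j') :
    alphaL A B = alphaH A B := by
  obtain ⟨j₀, hj₀, hval⟩ := hatt
  have : Nonempty (Fin n) := ⟨j₀⟩
  set S := {x ∈ Simp m | ∀ i, 0 < x i}
  have hS : (𝓝[S] x₀).NeBot :=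
    mem_closure_iff_nhdsWithin_neBot.1 (stdSimplex_subset_closure_pos hx₀)
  obtain ⟨x₁, hx₁, hpos₁⟩ := (eventually_mem_nhdsWithin (s := S) (a := x₀)).exists
  obtain ⟨j₁, hj₁⟩ := BRII_nonempty B x₁
  refine le_antisymm (alphaL_le_alphaH A ⟨j₁, x₁, ⟨hx₁, hj₁⟩, hpos₁⟩) ?_
  refine le_of_forall_pos_le_add fun δ hδ => ?_
  have hnear : ∀ᶠ x in 𝓝 x₀, ∀ k ∈ BRII B x₀, alphaH A B - δ < purePay A x k :=
    (Set.toFinite _).eventually_all.2 fun k hk =>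
      (continuous_purePay A k).continuousAt.eventually_const_lt
        (by simp only [hconst k hk j₀ hj₀, hval]; linarith)
  obtain ⟨x, ⟨hx, hpos⟩, hsub, hlt⟩ := ((eventually_mem_nhdsWithin (s := S)).and
    (nhdsWithin_le_nhds ((eventually_BRII_subset B x₀).and hnear))).exists
  have := le_alphaL_of_forall_BRII_le A B hx hpos fun k hk => (hlt k (hsub hk)).le
  linarith
end
end
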